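/- Spectral gap for the intertwining eigenvalues: for all natural numbers j, k with j + k ≥ 2, one has λ_{j,k} ≥ λ_{2,0}. -/
import Mathlib


/-- The eigenvalues `λ_{j,k}` of the intertwining operator `𝒜ₛ` on the complex sphere
`S^{2n+1}`, where `Q = 2n+2` is the homogeneous dimension and `0 < s < Q`. -/
noncomputable def intertwiningEigenvalue (n : ℕ) (s : ℝ) (j k : ℕ) : ℝ :=
  2 ^ (s / (2 * (n : ℝ) + 2)) *
    (Real.Gamma ((j : ℝ) + (2 * (n : ℝ) + 2 + s) / 4) *
      Real.Gamma ((k : ℝ) + (2 * (n : ℝ) + 2 + s) / 4)) /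
    (Real.Gamma ((j : ℝ) + (2 * (n : ℝ) + 2 - s) / 4) *
      Real.Gamma ((k : ℝ) + (2 * (n : ℝ) + 2 - s) / 4))

section aux

variable {A B : ℝ} (hB : 0 < B) (hBA : B < A)

private noncomputable def gr (A B : ℝ) (j : ℕ) : ℝ :=
  Real.Gamma ((j : ℝ) + A) / Real.Gamma ((j : ℝ) + B)

include hB hBA

private lemma gr_pos (j : ℕ) : 0 < gr A B j := by
  have hA : 0 < A := hB.trans hBA
  exact div_pos (Real.Gamma_pos_of_pos (by positivity)) (Real.Gamma_pos_of_pos (by positivity))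

private lemma gr_mono : Monotone (gr A B) := by
  have hA : 0 < A := hB.trans hBA
  apply monotone_nat_of_le_succ
  intro j
  have hjA : (0:ℝ) < (j:ℝ) + A := by positivity
  have hjB : (0:ℝ) < (j:ℝ) + B := by positivity
  have hGA : 0 < Real.Gamma ((j:ℝ) + A) := Real.Gamma_pos_of_pos hjA
  have hGB : 0 < Real.Gamma ((j:ℝ) + B) := Real.Gamma_pos_of_pos hjB
  have hGA' : 0 < Real.Gamma (((j+1 : ℕ):ℝ) + A) := Real.Gamma_pos_of_pos (by push_cast; positivity)
  have hGB' : 0 < Real.Gamma (((j+1 : ℕ):ℝ) + B) := Real.Gamma_pos_of_pos (by push_cast; positivity)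
  rw [gr, gr, div_le_div_iff₀ hGB hGB']
  have eA : Real.Gamma (((j+1 : ℕ):ℝ) + A) = ((j:ℝ) + A) * Real.Gamma ((j:ℝ) + A) := by
    have : (((j+1 : ℕ):ℝ) + A) = ((j:ℝ) + A) + 1 := by push_cast; ring
    rw [this, Real.Gamma_add_one hjA.ne']
  have eB : Real.Gamma (((j+1 : ℕ):ℝ) + B) = ((j:ℝ) + B) * Real.Gamma ((j:ℝ) + B) := by
    have : (((j+1 : ℕ):ℝ) + B) = ((j:ℝ) + B) + 1 := by push_cast; ring
    rw [this, Real.Gamma_add_one hjB.ne']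
  rw [eA, eB]
  nlinarith [mul_le_mul_of_nonneg_right (show (j:ℝ)+B ≤ (j:ℝ)+A by linarith)
    (mul_pos hGA hGB).le]

private lemma gr_key : gr A B 2 * gr A B 0 ≤ gr A B 1 * gr A B 1 := by
  have hA : 0 < B := hB
  have hA' : 0 < A := hB.trans hBA
  have hGA : 0 < Real.Gamma A := Real.Gamma_pos_of_pos hA'
  have hGB : 0 < Real.Gamma B := Real.Gamma_pos_of_pos hB
  have e1A : Real.Gamma ((1:ℕ):ℝ) = 1 := by norm_num [Real.Gamma_one]
  have gA1 : Real.Gamma (((1:ℕ):ℝ) + A) = A * Real.Gamma A := by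
    rw [show (((1:ℕ):ℝ) + A) = A + 1 by push_cast; ring, Real.Gamma_add_one hA'.ne']
  have gB1 : Real.Gamma (((1:ℕ):ℝ) + B) = B * Real.Gamma B := by
    rw [show (((1:ℕ):ℝ) + B) = B + 1 by push_cast; ring, Real.Gamma_add_one hB.ne']
  have gA2 : Real.Gamma (((2:ℕ):ℝ) + A) = (1 + A) * (A * Real.Gamma A) := by
    rw [show (((2:ℕ):ℝ) + A) = (A + 1) + 1 by push_cast; ring,
      Real.Gamma_add_one (by positivity), Real.Gamma_add_one hA'.ne']
    ring
  have gB2 : Real.Gamma (((2:ℕ):ℝ) + B) = (1 + B) * (B * Real.Gamma B) := by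
    rw [show (((2:ℕ):ℝ) + B) = (B + 1) + 1 by push_cast; ring,
      Real.Gamma_add_one (by positivity), Real.Gamma_add_one hB.ne']
    ring
  simp only [gr, Nat.cast_zero, zero_add]
  rw [gA1, gB1, gA2, gB2]
  rw [div_mul_div_comm, div_mul_div_comm, div_le_div_iff₀ (by positivity) (by positivity)]
  nlinarith [mul_pos hGA hGB, mul_pos (mul_pos hGA hGA) (mul_pos hGB hGB),
    mul_le_mul_of_nonneg_right hBA.le (mul_pos (mul_pos (mul_pos hGA hGA) (mul_pos hGB hGB)) (mul_pos hA' hB)).le]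

private lemma gr_spectral (j k : ℕ) (hjk : 2 ≤ j + k) :
    gr A B 2 * gr A B 0 ≤ gr A B j * gr A B k := by
  have hpos := gr_pos hB hBA
  have hmono := gr_mono hB hBA
  by_cases hj : 2 ≤ j
  · exact mul_le_mul (hmono hj) (hmono (Nat.zero_le k)) (hpos 0).le (hpos j).le
  · by_cases hk : 2 ≤ k
    · rw [mul_comm (gr A B j)]
      exact mul_le_mul (hmono hk) (hmono (Nat.zero_le j)) (hpos 0).le (hpos k).le
    · have hj1 : j = 1 := by omega
      have hk1 : k = 1 := by omega
      subst hj1; subst hk1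
      exact gr_key hB hBA

end aux

/-- **Spectral gap for the intertwining eigenvalues:** for all `j, k` with `j + k ≥ 2`,
one has `λ_{j,k} ≥ λ_{2,0}`. -/
theorem intertwiningEigenvalue_spectral_gap (n : ℕ) (hn : 1 ≤ n) (s : ℝ)
    (hs0 : 0 < s) (hsQ : s < 2 * (n : ℝ) + 2) (j k : ℕ) (hjk : 2 ≤ j + k) :
    intertwiningEigenvalue n s 2 0 ≤ intertwiningEigenvalue n s j k := by
  have hB : 0 < (2 * (n : ℝ) + 2 - s) / 4 := by linarith
  have hBA : (2 * (n : ℝ) + 2 - s) / 4 < (2 * (n : ℝ) + 2 + s) / 4 := by linarith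
  have key := gr_spectral hB hBA j k hjk
  have rewr : ∀ a b : ℕ, intertwiningEigenvalue n s a b
      = 2 ^ (s / (2 * (n : ℝ) + 2)) *
        (gr ((2 * (n : ℝ) + 2 + s) / 4) ((2 * (n : ℝ) + 2 - s) / 4) a *
         gr ((2 * (n : ℝ) + 2 + s) / 4) ((2 * (n : ℝ) + 2 - s) / 4) b) := by
    intro a b
    rw [intertwiningEigenvalue, gr, gr, div_mul_div_comm, mul_div_assoc]
  rw [rewr, rewr]
  have h2 : (0:ℝ) < 2 ^ (s / (2 * (n : ℝ) + 2)) := by positivity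
  exact mul_le_mul_of_nonneg_left key h2.le
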